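/- Let P be a balanced, Col-divisible, full-dimensional lattice polytope whose lattice points affinely generate ℤ^n, and let u, v, w ∈ Col(P). Then: (a) if ⟨P_u, w⟩ = 0 and the product vw exists, then ⟨P_u, v⟩ ≤ 0; (b) if v is not terminal, then there exists exactly one base facet F (i.e. F = P_z for some z ∈ Col(P)) with ⟨F, v⟩ = 1; (c) if there exist base facets F ≠ G with ⟨F,v⟩ = ⟨F,w⟩ = −1 and ⟨G,v⟩ = ⟨G,w⟩ = 1, then v = w. -/

import Mathlib

open Set

noncomputable section

/-- The real point corresponding to a lattice point of `ℤⁿ`. -/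
def toR {n : ℕ} (z : Fin n → ℤ) : Fin n → ℝ := fun i => (z i : ℝ)

/-- A lattice polytope, described as the convex hull of a nonempty finite set of
lattice points. -/
structure LatticePolytope (n : ℕ) where
  verts : Finset (Fin n → ℤ)
  nonem : verts.Nonempty

namespace LatticePolytope

variable {n : ℕ}

/-- The underlying set of the polytope. -/
def carrier (P : LatticePolytope n) : Set (Fin n → ℝ) :=
  convexHull ℝ (↑(P.verts.image toR))

/-- `P` is full-dimensional. -/
def IsFullDim (P : LatticePolytope n) : Prop :=
  (interior P.carrier).Nonempty

/-- The set `L_P` of lattice points of `P`. -/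
def latticePoints (P : LatticePolytope n) : Set (Fin n → ℤ) :=
  {z | toR z ∈ P.carrier}

/-- The lattice points of `P` affinely generate `ℤⁿ`. -/
def AffGen (P : LatticePolytope n) : Prop :=
  ∀ x₀ ∈ P.latticePoints,
    AddSubgroup.closure {y | ∃ x ∈ P.latticePoints, y = x - x₀} =
      (⊤ : AddSubgroup (Fin n → ℤ))

/-- The `ℝ`-linear extension of an additive form on `ℤⁿ`. -/
def formR (φ : (Fin n → ℤ) →+ ℤ) : (Fin n → ℝ) → ℝ :=
  fun x => ∑ i, x i * (φ (Pi.single i 1) : ℝ)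

/-- A facet of `P`, encoded together with its support form `⟨F,-⟩` (a surjective
additive form whose minimum `b_F` over `P` is attained exactly on the facet, the
facet being `(n-1)`-dimensional). -/
structure Facet (P : LatticePolytope n) where
  form : (Fin n → ℤ) →+ ℤ
  surj : Function.Surjective form
  b : ℤ
  min_le : ∀ x ∈ P.carrier, (b : ℝ) ≤ formR form x
  attained : ∃ x ∈ P.carrier, formR form x = (b : ℝ)
  dim : Module.finrank ℝ (vectorSpan ℝ {x ∈ P.carrier | formR form x = (b : ℝ)}) + 1 = n

/-- The underlying set of a facet. -/
def Facet.set {P : LatticePolytope n} (F : P.Facet) : Set (Fin n → ℝ) :=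
  {x ∈ P.carrier | formR F.form x = (F.b : ℝ)}

/-- `F` is a base facet for `v`, i.e. `v` is a column vector with base facet `F`. -/
def IsBaseFacet (P : LatticePolytope n) (v : Fin n → ℤ) (F : P.Facet) : Prop :=
  v ≠ 0 ∧ ∀ x : Fin n → ℤ, toR x ∈ P.carrier → toR x ∉ F.set →
    toR (x + v) ∈ P.carrier

/-- `v` is a column vector of `P`. -/
def IsColVec (P : LatticePolytope n) (v : Fin n → ℤ) : Prop :=
  ∃ F : P.Facet, P.IsBaseFacet v F

/-- `Col(P)`, the set of column vectors of `P`. -/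
def Col (P : LatticePolytope n) : Set (Fin n → ℤ) := {v | P.IsColVec v}

/-- The product `uv` of the column vectors `u` and `v` exists. -/
def ProdEx (P : LatticePolytope n) (u v : Fin n → ℤ) : Prop :=
  P.IsColVec u ∧ P.IsColVec v ∧ u + v ≠ 0 ∧
    ∀ Fu Fv : P.Facet, P.IsBaseFacet u Fu → P.IsBaseFacet v Fv →
      ∀ x : Fin n → ℤ, toR x ∈ P.carrier → toR x ∉ Fu.set → toR (x + u) ∉ Fv.set

/-- `P` is balanced: `⟨P_u, v⟩ ≤ 1` for all column vectors `u, v`. -/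
def Balanced (P : LatticePolytope n) : Prop :=
  ∀ u v : Fin n → ℤ, ∀ F : P.Facet, P.IsBaseFacet u F → P.IsColVec v → F.form v ≤ 1

/-- Weak existence of the product of a (nonempty) list of column vectors:
some bracketing makes all the recursively formed pairwise products exist. -/
inductive WeakProd (P : LatticePolytope n) : List (Fin n → ℤ) → Prop
  | single (v : Fin n → ℤ) (h : P.IsColVec v) : WeakProd P [v]
  | mul (L₁ L₂ : List (Fin n → ℤ)) (h₁ : WeakProd P L₁) (h₂ : WeakProd P L₂)
      (h : P.ProdEx L₁.sum L₂.sum) : WeakProd P (L₁ ++ L₂)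

/-- Strong existence of the product of a list of column vectors: all consecutive
products exist and all sums over intervals of length at least two are nonzero. -/
def StrongProd (P : LatticePolytope n) (L : List (Fin n → ℤ)) : Prop :=
  L ≠ [] ∧ (∀ x ∈ L, P.IsColVec x) ∧
  (∀ i : ℕ, ∀ h : i + 1 < L.length,
      P.ProdEx (L.get ⟨i, Nat.lt_of_succ_lt h⟩) (L.get ⟨i + 1, h⟩)) ∧
  (∀ r s : ℕ, r < s → s < L.length → ((L.drop r).take (s + 1 - r)).sum ≠ 0)

/-- `[V]` : the set of strongly existing products of elements of `V`. -/
def bra (P : LatticePolytope n) (V : Set (Fin n → ℤ)) : Set (Fin n → ℤ) :=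
  {w | ∃ L : List (Fin n → ℤ), (∀ x ∈ L, x ∈ V) ∧ P.StrongProd L ∧ L.sum = w}

/-- `⟨V⟩` : the set of weakly existing products of elements of `V`. -/
def ket (P : LatticePolytope n) (V : Set (Fin n → ℤ)) : Set (Fin n → ℤ) :=
  {w | ∃ L : List (Fin n → ℤ), (∀ x ∈ L, x ∈ V) ∧ P.WeakProd L ∧ L.sum = w}

end LatticePolytope

/-- An admissible finite directed graph (on vertex set `Fin k`): no isolated
vertices, no loops, and an edge `a → b` is the unique directed path from `a` to
`b`. -/
structure GoodGraph (k : ℕ) (E : Fin k → Fin k → Prop) : Prop where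
  no_isolated : ∀ a, (∃ b, E a b) ∨ (∃ b, E b a)
  no_loop : ∀ a, ¬ E a a
  unique_path : ∀ a b, E a b →
    ¬ ∃ c, Relation.TransGen E a c ∧ Relation.TransGen E c b

/-- A `Y`-graph: every vertex is the endpoint of at most one edge. -/
def IsYGraph (k : ℕ) (E : Fin k → Fin k → Prop) : Prop :=
  ∀ a b c, E b a → E c a → b = c

namespace LatticePolytope

variable {n : ℕ}

/-- The graph `E` supports the system `V`: `E` is admissible, and equivalence
classes of paths (i.e. reachable pairs of vertices) are in bijection with `[V]`
compatibly with the partial product structures. -/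
def Supports (P : LatticePolytope n) (V : Set (Fin n → ℤ)) (k : ℕ)
    (E : Fin k → Fin k → Prop) : Prop :=
  GoodGraph k E ∧
  ∃ f : {w // w ∈ P.bra V} → {p : Fin k × Fin k // Relation.TransGen E p.1 p.2},
    Function.Bijective f ∧
    ∀ u v : {w // w ∈ P.bra V},
      (P.ProdEx u.1 v.1 ↔ (f u).1.2 = (f v).1.1) ∧
      ∀ h : u.1 + v.1 ∈ P.bra V, P.ProdEx u.1 v.1 →
        (f ⟨u.1 + v.1, h⟩).1 = ((f u).1.1, (f v).1.2)

/-- `V` is a rigid system of column vectors of `P`. -/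
def IsRigid (P : LatticePolytope n) (V : Set (Fin n → ℤ)) : Prop :=
  V ⊆ P.Col ∧
  (∀ w, w ∈ P.bra V → -w ∉ P.bra V) ∧
  P.bra V = P.ket V ∧
  ∃ (k : ℕ) (E : Fin k → Fin k → Prop), P.Supports V k E

/-- `V` is a `Y`-rigid system of column vectors of `P`. -/
def IsYRigid (P : LatticePolytope n) (V : Set (Fin n → ℤ)) : Prop :=
  V ⊆ P.Col ∧
  (∀ w, w ∈ P.bra V → -w ∉ P.bra V) ∧
  P.bra V = P.ket V ∧
  ∃ (k : ℕ) (E : Fin k → Fin k → Prop), IsYGraph k E ∧ P.Supports V k E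

/-- `w` is an irreducible element of `[V]`. -/
def Irred (P : LatticePolytope n) (V : Set (Fin n → ℤ)) (w : Fin n → ℤ) : Prop :=
  w ∈ P.bra V ∧
  ¬ ∃ u v : Fin n → ℤ, u ∈ P.ket V ∧ v ∈ P.ket V ∧ P.ProdEx u v ∧ u + v = w

/-- The submonoid `S_P ⊆ ℤ^{n+1}` generated by `{(x,1) : x ∈ L_P}`. -/
def SP (P : LatticePolytope n) : AddSubmonoid ((Fin n → ℤ) × ℤ) :=
  AddSubmonoid.closure {p | ∃ x ∈ P.latticePoints, p = (x, (1 : ℤ))}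

/-- The height of `z ∈ ℤ^{n+1}` over the facet `F`. -/
def htF {P : LatticePolytope n} (F : P.Facet) (z : (Fin n → ℤ) × ℤ) : ℤ :=
  F.form z.1 - z.2 * F.b

end LatticePolytope

/-- `P` is `Col`-divisible: conditions (CD1) and (CD2) on products of column
vectors. -/
def LatticePolytope.ColDivisible {n : ℕ} (P : LatticePolytope n) : Prop :=
  (∀ a b c : Fin n → ℤ, a ≠ b → P.ProdEx a c → P.ProdEx b c →
      ∃ d, (P.ProdEx d b ∧ d + b = a) ∨ (P.ProdEx d a ∧ d + a = b)) ∧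
  (∀ a b c d : Fin n → ℤ, P.ProdEx a b → P.ProdEx c d → a + b = c + d → a ≠ c →
      ∃ t, (P.ProdEx c t ∧ c + t = a ∧ P.ProdEx t b ∧ t + b = d) ∨
           (P.ProdEx a t ∧ a + t = c ∧ P.ProdEx t d ∧ t + d = b))

/-- A facet is a base facet if it is the base facet of some column vector. -/
def LatticePolytope.IsBase {n : ℕ} (P : LatticePolytope n) (F : P.Facet) : Prop :=
  ∃ z, P.IsBaseFacet z F

/-- A column vector is terminal if it has positive height over no base facet. -/
def LatticePolytope.TerminalVec {n : ℕ} (P : LatticePolytope n) (v : Fin n → ℤ) : Prop :=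
  P.IsColVec v ∧ ¬ ∃ F : P.Facet, P.IsBase F ∧ 0 < F.form v

/-- The unit `N`-simplex `conv(0, e_1, …, e_N) ⊆ ℝ^N` as a lattice polytope. -/
def unitSimplex (N : ℕ) : LatticePolytope N where
  verts := insert 0 (Finset.univ.image fun i : Fin N => Pi.single i (1 : ℤ))
  nonem := ⟨0, Finset.mem_insert_self _ _⟩

/-- Doubling of `P` along the facet with support form `φ` (with `b = 0`), where
`u` is a fixed lattice vector with `φ u = 1`: the convex hull of `P × {0}` and
`ρ(P)`, `ρ(x) = (x - φ(x)·u, φ(x))`. -/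
def LatticePolytope.dbl {n : ℕ} (P : LatticePolytope n) (φ : (Fin n → ℤ) →+ ℤ)
    (u : Fin n → ℤ) : LatticePolytope (n + 1) where
  verts := (P.verts.image fun x => Fin.snoc x (0 : ℤ)) ∪
           (P.verts.image fun x => Fin.snoc (x - φ x • u) (φ x))
  nonem := (P.nonem.image _).mono Finset.subset_union_left

/-- The polytopal algebra `R[P] = R[S_P]`, realized as the subalgebra of
`R[ℤ^{n+1}]` generated by the monomials `(x,1)`, `x ∈ L_P`. -/
def polyAlg (R : Type) [CommRing R] {n : ℕ} (P : LatticePolytope n) :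
    Subalgebra R (AddMonoidAlgebra R ((Fin n → ℤ) × ℤ)) :=
  Algebra.adjoin R
    {a | ∃ x ∈ P.latticePoints, a = AddMonoidAlgebra.single (x, (1 : ℤ)) (1 : R)}

/-- The multiplicative map `z ↦ z·(1 + λv)^{ht_v z}` on `ℤ^{n+1}`. -/
def phiMap (R : Type) [CommRing R] {n : ℕ} {P : LatticePolytope n}
    (v : Fin n → ℤ) (F : P.Facet) (lam : R) (z : (Fin n → ℤ) × ℤ) :
    AddMonoidAlgebra R ((Fin n → ℤ) × ℤ) :=
  AddMonoidAlgebra.single z 1 *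
    (1 + AddMonoidAlgebra.single ((v, (0 : ℤ))) lam) ^ (LatticePolytope.htF F z).toNat

/-- An element of `R[ℤ^{n+1}]` is homogeneous of degree `d`. -/
def Homog (R : Type) [CommRing R] {n : ℕ}
    (a : AddMonoidAlgebra R ((Fin n → ℤ) × ℤ)) (d : ℕ) : Prop :=
  ∀ s ∈ a.coeff.support, s.2 = (d : ℤ)

/-- `e` is the elementary automorphism `e_v^λ` of `R[P]`: on monomials from `S_P`
it is given by `z ↦ z·(1 + λv)^{ht_v z}`. -/
def ElemAutProp (R : Type) [CommRing R] {n : ℕ} {P : LatticePolytope n}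
    (v : Fin n → ℤ) (F : P.Facet) (lam : R)
    (e : polyAlg R P →ₐ[R] polyAlg R P) : Prop :=
  ∀ z ∈ P.SP, ∀ hz : AddMonoidAlgebra.single z (1 : R) ∈ polyAlg R P,
    ((e ⟨AddMonoidAlgebra.single z 1, hz⟩ : polyAlg R P) :
        AddMonoidAlgebra R ((Fin n → ℤ) × ℤ)) = phiMap R v F lam z

/-- `e` is a graded endomorphism of `R[P]`. -/
def IsGradedEndo (R : Type) [CommRing R] {n : ℕ} {P : LatticePolytope n}
    (e : polyAlg R P →ₐ[R] polyAlg R P) : Prop :=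
  ∀ (a : polyAlg R P) (d : ℕ), Homog R (a : AddMonoidAlgebra R ((Fin n → ℤ) × ℤ)) d →
    Homog R ((e a : polyAlg R P) : AddMonoidAlgebra R ((Fin n → ℤ) × ℤ)) d

namespace LatticePolytope

variable {n : ℕ} {P : LatticePolytope n}

lemma vert_mem_latticePoints {z : Fin n → ℤ} (hz : z ∈ P.verts) : z ∈ P.latticePoints :=
  subset_convexHull ℝ _ (Finset.mem_coe.2 (Finset.mem_image_of_mem toR hz))

/-- `formR` as a linear map. -/
def linR (φ : (Fin n → ℤ) →+ ℤ) : (Fin n → ℝ) →ₗ[ℝ] ℝ :=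
  ∑ i, ((φ (Pi.single i 1) : ℝ) • (LinearMap.proj i : (Fin n → ℝ) →ₗ[ℝ] ℝ))

lemma linR_apply (φ : (Fin n → ℤ) →+ ℤ) (x : Fin n → ℝ) : linR φ x = formR φ x := by
  simp [linR, formR, mul_comm]

lemma form_apply (φ : (Fin n → ℤ) →+ ℤ) (z : Fin n → ℤ) :
    φ z = ∑ i, z i * φ (Pi.single i 1) := by
  conv_lhs => rw [← Finset.univ_sum_single z]
  rw [map_sum]
  refine Finset.sum_congr rfl fun i _ => ?_
  have h : Pi.single i (z i) = z i • (Pi.single i (1:ℤ) : Fin n → ℤ) := by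
    funext j
    by_cases hj : j = i <;> simp [hj, Pi.single_apply]
  rw [h, map_zsmul, smul_eq_mul]

lemma formR_toR (φ : (Fin n → ℤ) →+ ℤ) (z : Fin n → ℤ) : formR φ (toR z) = (φ z : ℝ) := by
  rw [form_apply φ z]
  push_cast
  rfl

lemma latt_form_ge {x : Fin n → ℤ} (hx : x ∈ P.latticePoints) (F : P.Facet) :
    F.b ≤ F.form x := by
  have h := F.min_le (toR x) hx
  rw [formR_toR] at h
  exact_mod_cast h

lemma mem_set_iff {x : Fin n → ℤ} (hx : x ∈ P.latticePoints) (F : P.Facet) :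
    toR x ∈ F.set ↔ F.form x = F.b := by
  constructor
  · rintro ⟨-, h⟩
    rw [formR_toR] at h
    exact_mod_cast h
  · intro h
    exact ⟨hx, by rw [formR_toR, h]⟩

lemma notin_set_iff {x : Fin n → ℤ} (hx : x ∈ P.latticePoints) (F : P.Facet) :
    toR x ∉ F.set ↔ F.form x ≠ F.b := by
  rw [mem_set_iff hx F]

lemma col_move {v x : Fin n → ℤ} {F : P.Facet} (hvF : P.IsBaseFacet v F)
    (hx : x ∈ P.latticePoints) (hxF : F.form x ≠ F.b) : x + v ∈ P.latticePoints :=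
  hvF.2 x hx ((notin_set_iff hx F).2 hxF)

end LatticePolytope
namespace LatticePolytope

variable {n : ℕ} {P : LatticePolytope n}

lemma vertImage_subset_carrier {y : Fin n → ℝ} (hy : y ∈ P.verts.image toR) :
    y ∈ P.carrier :=
  subset_convexHull ℝ _ (Finset.mem_coe.2 hy)

lemma face_weights (F : P.Facet) {x : Fin n → ℝ} (hx : x ∈ P.carrier)
    (hxf : formR F.form x = (F.b : ℝ)) :
    ∃ w : (Fin n → ℝ) → ℝ, (∀ y ∈ P.verts.image toR, 0 ≤ w y) ∧
      (∑ y ∈ P.verts.image toR, w y = 1) ∧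
      (x = ∑ y ∈ P.verts.image toR, w y • y) ∧
      ∀ y ∈ P.verts.image toR, w y ≠ 0 → formR F.form y = (F.b : ℝ) := by
  have hx' : x ∈ convexHull ℝ (↑(P.verts.image toR) : Set (Fin n → ℝ)) := hx
  rw [Finset.mem_convexHull] at hx'
  obtain ⟨w, hw0, hw1, hwx⟩ := hx'
  rw [Finset.centerMass_eq_of_sum_1 _ id hw1] at hwx
  simp only [id] at hwx
  refine ⟨w, hw0, hw1, hwx.symm, ?_⟩
  have hsum : ∑ y ∈ P.verts.image toR, w y * (formR F.form y - F.b) = 0 := by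
    have hfx : formR F.form x = ∑ y ∈ P.verts.image toR, w y * formR F.form y := by
      rw [← linR_apply, ← hwx, map_sum]
      simp [linR_apply]
    have : ∑ y ∈ P.verts.image toR, w y * (formR F.form y - F.b)
        = (∑ y ∈ P.verts.image toR, w y * formR F.form y) -
          (∑ y ∈ P.verts.image toR, w y) * (F.b : ℝ) := by
      rw [Finset.sum_mul, ← Finset.sum_sub_distrib]
      exact Finset.sum_congr rfl fun y _ => by ring
    rw [this, ← hfx, hw1, one_mul, hxf, sub_self]
  have hterm := (Finset.sum_eq_zero_iff_of_nonneg ?_).1 hsum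
  · intro y hy hwy
    have := hterm y hy
    have h2 : formR F.form y - F.b = 0 := by
      rcases mul_eq_zero.1 this with h | h
      · exact absurd h hwy
      · exact h
    linarith [h2]
  · intro y hy
    have h1 : (F.b : ℝ) ≤ formR F.form y := F.min_le y (vertImage_subset_carrier hy)
    have h2 : 0 ≤ w y := hw0 y hy
    nlinarith

lemma exists_latt_form_eq (F : P.Facet) : ∃ z ∈ P.latticePoints, F.form z = F.b := by
  obtain ⟨x, hx, hxf⟩ := F.attained
  obtain ⟨w, hw0, hw1, _, hface⟩ := face_weights F hx hxf
  have : ∃ y ∈ P.verts.image toR, w y ≠ 0 := by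
    by_contra hcon
    push_neg at hcon
    rw [Finset.sum_eq_zero hcon] at hw1
    norm_num at hw1
  obtain ⟨y, hy, hwy⟩ := this
  obtain ⟨z, hz, rfl⟩ := Finset.mem_image.1 hy
  refine ⟨z, vert_mem_latticePoints hz, ?_⟩
  have := hface _ hy hwy
  rw [formR_toR] at this
  exact_mod_cast this

lemma face_rep {F G : P.Facet}
    (hFG : ∀ z ∈ P.latticePoints, F.form z = F.b → G.form z = G.b)
    {x : Fin n → ℝ} (hx : x ∈ P.carrier) (hxf : formR F.form x = (F.b : ℝ)) :
    formR G.form x = (G.b : ℝ) := by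
  obtain ⟨w, hw0, hw1, hwx, hface⟩ := face_weights F hx hxf
  have key : ∀ y ∈ P.verts.image toR, w y * formR G.form y = w y * G.b := by
    intro y hy
    rcases eq_or_ne (w y) 0 with h | h
    · rw [h, zero_mul, zero_mul]
    · obtain ⟨z, hz, rfl⟩ := Finset.mem_image.1 hy
      have h1 := hface _ hy h
      rw [formR_toR] at h1
      have h2 : F.form z = F.b := by exact_mod_cast h1
      have h3 := hFG z (vert_mem_latticePoints hz) h2
      rw [formR_toR, h3]
  have : formR G.form x = ∑ y ∈ P.verts.image toR, w y * formR G.form y := by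
    rw [← linR_apply, hwx, map_sum]
    simp [linR_apply]
  rw [this, Finset.sum_congr rfl key, ← Finset.sum_mul, hw1, one_mul]

end LatticePolytope
namespace LatticePolytope

variable {n : ℕ} {P : LatticePolytope n}

lemma Facet.set_def (F : P.Facet) : F.set = {x ∈ P.carrier | formR F.form x = (F.b : ℝ)} := rfl

lemma facet_eq (hfd : P.IsFullDim) (F G : P.Facet)
    (h : ∀ z ∈ P.latticePoints, F.form z = F.b → G.form z = G.b) : F = G := by
  classical
  obtain ⟨z₁, hz₁⟩ := F.surj 1
  set f : (Fin n → ℝ) →ₗ[ℝ] ℝ := linR F.form with hf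
  set g : (Fin n → ℝ) →ₗ[ℝ] ℝ := linR G.form with hg
  have hfz₁ : f (toR z₁) = 1 := by rw [hf, linR_apply, formR_toR, hz₁]; norm_num
  -- n ≥ 1
  have hn : 1 ≤ n := by have := F.dim; omega
  -- F.set spans
  have hFdim : Module.finrank ℝ (vectorSpan ℝ F.set) + 1 = n := F.dim
  -- vectorSpan F.set ≤ ker f
  have hkerf : vectorSpan ℝ F.set ≤ LinearMap.ker f := by
    rw [vectorSpan_def]
    rw [Submodule.span_le]
    rintro y ⟨p, hp, q, hq, rfl⟩
    simp only [SetLike.mem_coe, LinearMap.mem_ker, vsub_eq_sub, map_sub]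
    rw [hf, linR_apply, linR_apply, hp.2, hq.2, sub_self]
  have hkerg : vectorSpan ℝ F.set ≤ LinearMap.ker g := by
    rw [vectorSpan_def]
    rw [Submodule.span_le]
    rintro y ⟨p, hp, q, hq, rfl⟩
    simp only [SetLike.mem_coe, LinearMap.mem_ker, vsub_eq_sub, map_sub]
    have hp' := face_rep h hp.1 hp.2
    have hq' := face_rep h hq.1 hq.2
    rw [hg, linR_apply, linR_apply, hp', hq', sub_self]
  -- range f = ⊤
  have hrange : LinearMap.range f = ⊤ := by
    rw [LinearMap.range_eq_top]
    intro y
    exact ⟨y • toR z₁, by rw [map_smul, hfz₁, smul_eq_mul, mul_one]⟩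
  have hrk : Module.finrank ℝ (LinearMap.ker f) = n - 1 := by
    have h1 := LinearMap.finrank_range_add_finrank_ker f
    rw [hrange] at h1
    rw [finrank_top] at h1
    have h2 : Module.finrank ℝ ((Fin n → ℝ)) = n := by simp
    have h3 : Module.finrank ℝ ℝ = 1 := Module.finrank_self ℝ
    omega
  -- ker f = vectorSpan F.set
  have hkeq : vectorSpan ℝ F.set = LinearMap.ker f :=
    Submodule.eq_of_le_of_finrank_le hkerf (by omega)
  have hfg : LinearMap.ker f ≤ LinearMap.ker g := hkeq ▸ hkerg
  -- g = c • f
  set c : ℝ := g (toR z₁) with hc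
  have hprop : ∀ y : Fin n → ℝ, g y = f y * c := by
    intro y
    have hy : y - f y • toR z₁ ∈ LinearMap.ker f := by
      rw [LinearMap.mem_ker, map_sub, map_smul, hfz₁, smul_eq_mul, mul_one, sub_self]
    have := hfg hy
    rw [LinearMap.mem_ker, map_sub, map_smul, smul_eq_mul] at this
    linarith [this]
  -- integer version
  have hint : ∀ z : Fin n → ℤ, (G.form z : ℝ) = (F.form z : ℝ) * c := by
    intro z
    have := hprop (toR z)
    rwa [hg, hf, linR_apply, linR_apply, formR_toR, formR_toR] at this
  have hcz : c = ((G.form z₁ : ℤ) : ℝ) := by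
    have := hint z₁
    rw [hz₁] at this
    push_cast at this
    linarith
  set c' : ℤ := G.form z₁ with hc'
  have hintz : ∀ z : Fin n → ℤ, G.form z = F.form z * c' := by
    intro z
    have := hint z
    rw [hcz] at this
    exact_mod_cast this
  -- c' = ±1
  obtain ⟨z₂, hz₂⟩ := G.surj 1
  have hunit : c' = 1 ∨ c' = -1 := by
    have h5 := hintz z₂
    rw [hz₂] at h5
    have h6 : c' * F.form z₂ = 1 := by rw [mul_comm]; linarith
    rcases Int.isUnit_iff.1 (IsUnit.of_mul_eq_one (a := c') (F.form z₂) h6) with h | h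
    · exact Or.inl h
    · exact Or.inr h
  -- lattice point on F
  obtain ⟨t₀, ht₀L, ht₀⟩ := exists_latt_form_eq F
  have hGb : G.b = F.b * c' := by
    have h1 := h t₀ ht₀L ht₀
    have h2 := hintz t₀
    rw [h1, ht₀] at h2
    exact h2
  -- exclude c' = -1 using interior point
  have hcpos : c' = 1 := by
    rcases hunit with h1 | h1
    · exact h1
    · exfalso
      obtain ⟨p, hp⟩ := hfd
      have hpc : p ∈ P.carrier := interior_subset hp
      -- formR F p > F.b
      have hplt : (F.b : ℝ) < formR F.form p := by
        rcases lt_or_eq_of_le (F.min_le p hpc) with h2 | h2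
        · exact h2
        · exfalso
          -- move into the interior in direction -toR z₁
          have hcont : ContinuousAt (fun t : ℝ => p + t • toR z₁) 0 := by fun_prop
          have hmem : P.carrier ∈ nhds ((fun t : ℝ => p + t • toR z₁) 0) := by
            simp only [zero_smul, add_zero]
            exact mem_interior_iff_mem_nhds.1 hp
          have hnb := hcont.preimage_mem_nhds hmem
          obtain ⟨ε, hε, hball⟩ := Metric.mem_nhds_iff.1 hnb
          have hmem2 : p + (-(ε/2)) • toR z₁ ∈ P.carrier := by
            apply hball
            simp only [Metric.mem_ball, Real.dist_eq, sub_zero]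
            rw [abs_neg, abs_of_pos (by linarith)]
            linarith
          have h3 := F.min_le _ hmem2
          rw [← linR_apply, map_add, map_smul, hfz₁, smul_eq_mul, mul_one, linR_apply, ← h2] at h3
          linarith
      have hGp := G.min_le p hpc
      have h4 : formR G.form p = formR F.form p * c := by
        have := hprop p
        rwa [hg, hf, linR_apply, linR_apply] at this
      have e1 : (G.b : ℝ) = -(F.b : ℝ) := by rw [hGb, h1]; push_cast; ring
      have e2 : formR G.form p = -formR F.form p := by
        rw [h4, hcz, h1]; push_cast; ring
      rw [e1, e2] at hGp
      linarith
  -- conclude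
  have hform : F.form = G.form :=
    AddMonoidHom.ext fun z => by rw [hintz z, hcpos, mul_one]
  have hb : F.b = G.b := by rw [hGb, hcpos, mul_one]
  cases F with
  | mk form surj b min_le attained dim =>
    cases G with
    | mk form' surj' b' min_le' attained' dim' =>
      simp only at hform hb
      subst hform
      subst hb
      rfl

end LatticePolytope
namespace LatticePolytope

variable {n : ℕ} {P : LatticePolytope n}

lemma latt_coord_bound (P : LatticePolytope n) (i : Fin n) :
    ∃ M : ℤ, 0 ≤ M ∧ ∀ x ∈ P.latticePoints, |x i| ≤ M := by
  classical
  refine ⟨P.verts.sup' P.nonem (fun z => |z i|), ?_, ?_⟩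
  · obtain ⟨z₀, hz₀⟩ := P.nonem
    exact le_trans (abs_nonneg (z₀ i)) (Finset.le_sup' (fun z : Fin n → ℤ => |z i|) hz₀)
  · set M : ℤ := P.verts.sup' P.nonem (fun z => |z i|) with hM
    have hlin : IsLinearMap ℝ (fun y : Fin n → ℝ => y i) :=
      ⟨fun a b => rfl, fun c a => rfl⟩
    have hconv : Convex ℝ {y : Fin n → ℝ | -(M:ℝ) ≤ y i ∧ y i ≤ (M:ℝ)} := by
      have h1 := convex_halfSpace_ge hlin (-(M:ℝ))
      have h2 := convex_halfSpace_le hlin ((M:ℝ))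
      have he : {y : Fin n → ℝ | -(M:ℝ) ≤ y i ∧ y i ≤ (M:ℝ)}
          = {y : Fin n → ℝ | -(M:ℝ) ≤ y i} ∩ {y : Fin n → ℝ | y i ≤ (M:ℝ)} := rfl
      rw [he]
      exact h1.inter h2
    have hsub : P.carrier ⊆ {y : Fin n → ℝ | -(M:ℝ) ≤ y i ∧ y i ≤ (M:ℝ)} := by
      apply convexHull_min ?_ hconv
      intro y hy
      obtain ⟨z, hz, rfl⟩ := Finset.mem_image.1 (Finset.mem_coe.1 hy)
      have hb : |z i| ≤ M := Finset.le_sup' (fun z : Fin n → ℤ => |z i|) hz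
      have hb' := abs_le.1 hb
      constructor
      · show -(M:ℝ) ≤ (z i : ℝ)
        exact_mod_cast hb'.1
      · show (z i : ℝ) ≤ (M:ℝ)
        exact_mod_cast hb'.2
    intro x hx
    have h := hsub hx
    simp only [Set.mem_setOf_eq] at h
    have h1 : -(M:ℝ) ≤ (x i : ℝ) := h.1
    have h2 : (x i : ℝ) ≤ (M:ℝ) := h.2
    rw [abs_le]
    exact ⟨by exact_mod_cast h1, by exact_mod_cast h2⟩

lemma dvd_of_dvd_heights (hgen : P.AffGen) (F : P.Facet) (d : ℤ)
    (hd : ∀ x ∈ P.latticePoints, d ∣ (F.form x - F.b)) : d ∣ 1 := by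
  obtain ⟨z₀, hz₀⟩ := P.nonem
  have hx₀ : z₀ ∈ P.latticePoints := vert_mem_latticePoints hz₀
  have hcl := hgen z₀ hx₀
  have hsub : AddSubgroup.closure {y | ∃ x ∈ P.latticePoints, y = x - z₀}
      ≤ (AddSubgroup.zmultiples d).comap F.form := by
    rw [AddSubgroup.closure_le]
    rintro y ⟨x, hx, rfl⟩
    rw [SetLike.mem_coe, AddSubgroup.mem_comap, Int.mem_zmultiples_iff, map_sub]
    have h1 := hd x hx
    have h2 := hd z₀ hx₀
    have he : F.form x - F.form z₀ = (F.form x - F.b) - (F.form z₀ - F.b) := by ring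
    rw [he]
    exact dvd_sub h1 h2
  rw [hcl, top_le_iff] at hsub
  obtain ⟨z₁, hz₁⟩ := F.surj 1
  have hm : z₁ ∈ (AddSubgroup.zmultiples d).comap F.form := by
    rw [hsub]; trivial
  rw [AddSubgroup.mem_comap, Int.mem_zmultiples_iff, hz₁] at hm
  exact hm

lemma base_form_eq_neg_one (hgen : P.AffGen) {v : Fin n → ℤ} {F : P.Facet}
    (hv : P.IsBaseFacet v F) : F.form v = -1 := by
  classical
  have hne : ∃ x ∈ P.latticePoints, F.form x ≠ F.b := by
    by_contra hcon
    push_neg at hcon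
    have := dvd_of_dvd_heights hgen F 2 (fun x hx => by rw [hcon x hx]; simp)
    omega
  have hneg : F.form v ≤ -1 := by
    by_contra hc
    push_neg at hc
    have hc' : 0 ≤ F.form v := by omega
    obtain ⟨x, hxL, hxne⟩ := hne
    have hxgt : F.b < F.form x := lt_of_le_of_ne (latt_form_ge hxL F) (Ne.symm hxne)
    have hray : ∀ k : ℕ, (x + k • v) ∈ P.latticePoints ∧ F.b < F.form (x + k • v) := by
      intro k
      induction k with
      | zero => simpa using ⟨hxL, hxgt⟩
      | succ k ih =>
        have hmem : x + k • v + v ∈ P.latticePoints := col_move hv ih.1 (ne_of_gt ih.2)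
        have hstep : x + (k+1) • v = x + k • v + v := by
          rw [add_smul, one_smul, add_assoc]
        refine ⟨by rw [hstep]; exact hmem, ?_⟩
        rw [hstep, map_add]
        omega
    obtain ⟨i, hvi⟩ : ∃ i, v i ≠ 0 := Function.ne_iff.1 hv.1
    obtain ⟨M, hM0, hMb⟩ := latt_coord_bound P i
    set k₀ : ℕ := (M + |x i| + 1).toNat with hk₀
    have hk₀' : (k₀ : ℤ) = M + |x i| + 1 := by
      rw [hk₀, Int.toNat_of_nonneg (by positivity)]
    have hmem := (hray k₀).1
    have habs := hMb _ hmem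
    have hcoord : (x + k₀ • v) i = x i + (k₀:ℤ) * v i := by
      simp [Pi.add_apply, Pi.smul_apply, mul_comm]
    rw [hcoord] at habs
    have h1 : |(k₀:ℤ) * v i| ≤ |x i + (k₀:ℤ) * v i| + |x i| := by
      calc |(k₀:ℤ) * v i| = |(x i + (k₀:ℤ) * v i) - x i| := by ring_nf
        _ ≤ |x i + (k₀:ℤ) * v i| + |x i| := abs_sub _ _
    have h2 : (k₀:ℤ) ≤ |(k₀:ℤ) * v i| := by
      rw [abs_mul, abs_of_nonneg (by positivity : (0:ℤ) ≤ (k₀:ℤ))]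
      have h3 := Int.one_le_abs hvi
      nlinarith [(by positivity : (0:ℤ) ≤ (k₀:ℤ))]
    omega
  set T : Set ℕ := {m | 0 < m ∧ ∃ x ∈ P.latticePoints, F.form x - F.b = (m:ℤ)} with hT
  have hTne : T.Nonempty := by
    obtain ⟨x, hxL, hxne⟩ := hne
    have hge := latt_form_ge hxL F
    refine ⟨(F.form x - F.b).toNat, ?_, x, hxL, ?_⟩
    · omega
    · rw [Int.toNat_of_nonneg (by omega)]
  obtain ⟨hh₀pos, x₁, hx₁L, hx₁⟩ := Nat.sInf_mem hTne
  have hcv : F.form v = -((sInf T : ℕ):ℤ) := by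
    have hx₁ne : F.form x₁ ≠ F.b := by omega
    have hmem : x₁ + v ∈ P.latticePoints := col_move hv hx₁L hx₁ne
    have hge := latt_form_ge hmem F
    have hsum : F.form (x₁ + v) = F.form x₁ + F.form v := map_add _ _ _
    rcases eq_or_lt_of_le hge with heq | hlt
    · omega
    · exfalso
      have hm : (F.form (x₁ + v) - F.b).toNat ∈ T :=
        ⟨by omega, x₁ + v, hmem, by rw [Int.toNat_of_nonneg (by omega)]⟩
      have hle := Nat.sInf_le hm
      omega
  have hdvd : ∀ m : ℕ, ∀ x ∈ P.latticePoints, F.form x - F.b = (m:ℤ) →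
      ((sInf T : ℕ):ℤ) ∣ (m:ℤ) := by
    intro m
    induction m using Nat.strong_induction_on with
    | _ m ih =>
      intro x hx hm
      rcases Nat.eq_zero_or_pos m with rfl | hm0
      · simp
      · have hmT : m ∈ T := ⟨hm0, x, hx, hm⟩
        have hle : sInf T ≤ m := Nat.sInf_le hmT
        have hx' : x + v ∈ P.latticePoints := col_move hv hx (by omega)
        have hform : F.form (x+v) - F.b = ((m - sInf T : ℕ) : ℤ) := by
          have hsum : F.form (x + v) = F.form x + F.form v := map_add _ _ _
          rw [hsum, hcv]
          push_cast [Nat.cast_sub hle]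
          omega
        have hih := ih (m - sInf T) (by omega) (x+v) hx' hform
        obtain ⟨t, ht⟩ := hih
        refine ⟨t + 1, ?_⟩
        have he : ((m - sInf T : ℕ) : ℤ) = (m:ℤ) - ((sInf T : ℕ):ℤ) := by
          push_cast [Nat.cast_sub hle]; ring
        rw [he] at ht
        linarith [ht]
  have hone : ((sInf T : ℕ):ℤ) ∣ 1 := by
    apply dvd_of_dvd_heights hgen F
    intro x hx
    have hge := latt_form_ge hx F
    have hh := hdvd (F.form x - F.b).toNat x hx (by rw [Int.toNat_of_nonneg (by omega)])
    rwa [Int.toNat_of_nonneg (by omega)] at hh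
  have hfin : sInf T = 1 := by
    have := Int.le_of_dvd (by norm_num) hone
    omega
  rw [hcv, hfin]
  norm_num

end LatticePolytope
namespace LatticePolytope

variable {n : ℕ} {P : LatticePolytope n}

lemma isBaseFacet_add {u v : Fin n → ℤ} {F : P.Facet} (hp : P.ProdEx u v)
    (hF : P.IsBaseFacet u F) : P.IsBaseFacet (u + v) F := by
  obtain ⟨hu, hvcol, hne, hcond⟩ := hp
  obtain ⟨Fv, hFv⟩ := hvcol
  refine ⟨hne, fun x hx hxF => ?_⟩
  have h1 := hF.2 x hx hxF
  have h2 := hcond F Fv hF hFv x hx hxF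
  have h3 := hFv.2 (x+u) h1 h2
  rwa [add_assoc] at h3

lemma prod_form_eq_zero (hgen : P.AffGen) {u v : Fin n → ℤ} {F : P.Facet}
    (hp : P.ProdEx u v) (hF : P.IsBaseFacet u F) : F.form v = 0 := by
  have h1 := base_form_eq_neg_one hgen (isBaseFacet_add hp hF)
  have h2 := base_form_eq_neg_one hgen hF
  rw [map_add] at h1
  omega

lemma base_facet_unique (hfd : P.IsFullDim) (hgen : P.AffGen) {v : Fin n → ℤ}
    {F F' : P.Facet} (h : P.IsBaseFacet v F) (h' : P.IsBaseFacet v F') : F = F' := by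
  apply facet_eq hfd
  intro t ht htF
  by_contra hne
  have ht' : t + v ∈ P.latticePoints := col_move h' ht hne
  have hge := latt_form_ge ht' F
  have h1 := base_form_eq_neg_one hgen h
  rw [map_add, htF, h1] at hge
  omega

lemma prodEx_of_form_pos (hfd : P.IsFullDim) (hgen : P.AffGen) {vv uu : Fin n → ℤ}
    {Fvv Guu : P.Facet} (h1 : P.IsBaseFacet vv Fvv) (h2 : P.IsBaseFacet uu Guu)
    (hne : vv + uu ≠ 0) (hpos : 0 < Guu.form vv) : P.ProdEx vv uu := by
  refine ⟨⟨Fvv, h1⟩, ⟨Guu, h2⟩, hne, ?_⟩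
  intro F1 F2 hF1 hF2 x hx hx1
  have e1 : F1 = Fvv := base_facet_unique hfd hgen hF1 h1
  have e2 : F2 = Guu := base_facet_unique hfd hgen hF2 h2
  subst e1 e2
  have hxv : F1.form x ≠ F1.b := (notin_set_iff hx F1).1 hx1
  have hxL : x + vv ∈ P.latticePoints := col_move h1 hx hxv
  refine (notin_set_iff hxL F2).2 ?_
  have hge := latt_form_ge hx F2
  rw [map_add]
  omega

lemma part_a (hfd : P.IsFullDim) (hgen : P.AffGen) (hbal : P.Balanced)
    (hcd : P.ColDivisible) {u v w : Fin n → ℤ} {Fu : P.Facet}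
    (hFu : P.IsBaseFacet u Fu) (hFuw : Fu.form w = 0) (hvw : P.ProdEx v w) :
    Fu.form v ≤ 0 := by
  by_contra hpos
  push_neg at hpos
  have hv := hvw.1
  have hw := hvw.2.1
  have hvwne := hvw.2.2.1
  have h1 : Fu.form v = 1 := le_antisymm (hbal u v Fu hFu hv) hpos
  obtain ⟨Fv, hFv⟩ := hv
  obtain ⟨Fw, hFw⟩ := hw
  have hFvv := base_form_eq_neg_one hgen hFv
  have hFvw : Fv.form w = 0 := prod_form_eq_zero hgen hvw hFv
  have hFuu := base_form_eq_neg_one hgen hFu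
  have hFww := base_form_eq_neg_one hgen hFw
  have hw0 : w ≠ 0 := hFw.1
  by_cases hvu : v + u = 0
  · -- v = -u : contradict ProdEx v w directly
    have hvu' : v = -u := by
      have := congrArg (fun t => t - u) hvu
      simpa [add_sub_cancel_right] using this
    have hFwFu : Fw ≠ Fu := fun he => by rw [he] at hFww; omega
    have hz : ∃ z ∈ P.latticePoints, Fw.form z = Fw.b ∧ Fu.form z ≠ Fu.b := by
      by_contra hcon
      push_neg at hcon
      exact hFwFu (facet_eq hfd Fw Fu hcon)
    obtain ⟨z, hzL, hzFw, hzFu⟩ := hz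
    have hxL : z + u ∈ P.latticePoints := col_move hFu hzL hzFu
    have hFvu : Fv.form u = 1 := by
      rw [hvu', map_neg] at hFvv
      omega
    have hxFv : Fv.form (z + u) ≠ Fv.b := by
      have hge := latt_form_ge hzL Fv
      rw [map_add, hFvu]
      omega
    have hbad := hvw.2.2.2 Fv Fw hFv hFw (z+u) hxL ((notin_set_iff hxL Fv).2 hxFv)
    apply hbad
    have he : z + u + v = z := by rw [add_assoc, add_comm u v, hvu, add_zero]
    rw [he]
    exact (mem_set_iff hzL Fw).2 hzFw
  · -- main case
    have hpvu : P.ProdEx v u := prodEx_of_form_pos hfd hgen hFv hFu hvu (by omega)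
    have hFvu0 : Fv.form u = 0 := prod_form_eq_zero hgen hpvu hFv
    have hbvw : P.IsBaseFacet (v + w) Fv := isBaseFacet_add hvw hFv
    have hpvwu : P.ProdEx (v+w) u := by
      apply prodEx_of_form_pos hfd hgen hbvw hFu
      · intro h0
        have := congrArg Fv.form h0
        rw [map_add, map_add, hFvv, hFvw, hFvu0, map_zero] at this
        omega
      · rw [map_add, h1, hFuw]
        omega
    obtain ⟨d, hd⟩ := hcd.1 v (v+w) u
      (fun he => hw0 (by have := congrArg (fun t => t - v) he; simpa using this.symm))
      hpvu hpvwu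
    rcases hd with ⟨hpd, hsum⟩ | ⟨hpd, hsum⟩
    · -- d + (v+w) = v, so d = -w
      have hdw : d = -w := by
        have : d = v - (v + w) := eq_sub_of_add_eq hsum
        rw [this]; abel
      subst hdw
      obtain ⟨Fd, hFd⟩ := hpd.1
      have hbase : P.IsBaseFacet v Fd := by
        have hb := isBaseFacet_add hpd hFd
        have he : -w + (v + w) = v := by abel
        rwa [he] at hb
      have heq : Fd = Fv := base_facet_unique hfd hgen hbase hFv
      have hnw := base_form_eq_neg_one hgen hFd
      rw [heq, map_neg] at hnw
      omega
    · -- d + v = v + w, so d = w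
      have hdw : d = w := by
        have : d = (v + w) - v := eq_sub_of_add_eq hsum
        rw [this]; abel
      rw [hdw] at hpd
      have hb1 : P.IsBaseFacet (w + v) Fw := isBaseFacet_add hpd hFw
      have hb1' : P.IsBaseFacet (v + w) Fw := by rwa [add_comm] at hb1
      have heq : Fw = Fv := base_facet_unique hfd hgen hb1' hbvw
      rw [heq] at hFww
      omega

end LatticePolytope
namespace LatticePolytope

variable {n : ℕ} {P : LatticePolytope n}

lemma part_b_aux (hfd : P.IsFullDim) (hgen : P.AffGen) (hbal : P.Balanced)
    (hcd : P.ColDivisible) {v b : Fin n → ℤ} {F G Fv : P.Facet}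
    (hFv' : P.IsBaseFacet v Fv) (hFbase : P.IsBase F) (hb : P.IsBaseFacet b G)
    (hFG : F ≠ G) (hFv : F.form v = 1) (hGv : G.form v = 1) (hvb : v + b ≠ 0) :
    False := by
  have hpvb : P.ProdEx v b := prodEx_of_form_pos hfd hgen hFv' hb hvb (by omega)
  obtain ⟨a, ha⟩ := hFbase
  have hFb0 : F.form b ≠ 0 := by
    intro h0
    have := part_a hfd hgen hbal hcd ha h0 hpvb
    omega
  have hFb1 : F.form b ≠ 1 := by
    intro h1e
    have hcol : P.IsColVec (v + b) := ⟨Fv, isBaseFacet_add hpvb hFv'⟩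
    have := hbal a (v+b) F ha hcol
    rw [map_add, hFv, h1e] at this
    omega
  have hFble : F.form b ≤ -1 := by
    have := hbal a b F ha ⟨G, hb⟩
    omega
  apply hFG
  apply facet_eq hfd F G
  intro t ht htF
  by_contra hneq
  have htL : t + b ∈ P.latticePoints := col_move hb ht hneq
  have hge := latt_form_ge htL F
  rw [map_add, htF] at hge
  omega

end LatticePolytope

/-- Combinatorial properties of column vectors of a balanced `Col`-divisible
polytope. -/
theorem statement16 {n : ℕ} (P : LatticePolytope n) (hfd : P.IsFullDim)
    (hgen : P.AffGen) (hbal : P.Balanced) (hcd : P.ColDivisible)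
    (u v w : Fin n → ℤ) (hu : P.IsColVec u) (hv : P.IsColVec v)
    (hw : P.IsColVec w) :
    (∀ Fu : P.Facet, P.IsBaseFacet u Fu → Fu.form w = 0 → P.ProdEx v w →
      Fu.form v ≤ 0) ∧
    (¬ P.TerminalVec v → ∃! F : P.Facet, P.IsBase F ∧ F.form v = 1) ∧
    (∀ F G : P.Facet, P.IsBase F → P.IsBase G → F ≠ G →
      F.form v = -1 → F.form w = -1 → G.form v = 1 → G.form w = 1 →
      v = w) := by
  open LatticePolytope in
  refine ⟨?_, ?_, ?_⟩
  · intro Fu hFu hFuw hvw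
    exact P.part_a hfd hgen hbal hcd hFu hFuw hvw
  · -- part (b)
    intro hterm
    have hex : ∃ F : P.Facet, P.IsBase F ∧ 0 < F.form v := by
      by_contra hcon
      exact hterm ⟨hv, fun ⟨F, h1, h2⟩ => hcon ⟨F, h1, h2⟩⟩
    obtain ⟨F, hFbase, hFpos⟩ := hex
    obtain ⟨z, hz⟩ := hFbase
    have hF1 : F.form v = 1 := le_antisymm (hbal z v F hz hv) hFpos
    refine ⟨F, ⟨⟨z, hz⟩, hF1⟩, ?_⟩
    rintro G ⟨hGbase, hGv⟩
    by_contra hGF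
    obtain ⟨Fv', hFv'⟩ := hv
    obtain ⟨bG, hbG⟩ := hGbase
    by_cases hvb : v + bG = 0
    · by_cases hvz : v + z = 0
      · -- z = bG, so F = G, contra
        have h1 : z = -v := by
          have := add_eq_zero_iff_eq_neg.1 hvz
          rw [this]; abel
        have h2 : bG = -v := by
          have := add_eq_zero_iff_eq_neg.1 hvb
          rw [this]; abel
        have hbG' : P.IsBaseFacet z G := by rw [h1, ← h2]; exact hbG
        exact hGF (P.base_facet_unique hfd hgen hbG' hz)
      · -- swap roles of F and G
        exact P.part_b_aux hfd hgen hbal hcd hFv' ⟨bG, hbG⟩ hz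
          hGF hGv hF1 hvz
    · exact P.part_b_aux hfd hgen hbal hcd hFv' ⟨z, hz⟩ hbG
        (fun he => hGF he.symm) hF1 hGv hvb
  · -- part (c)
    intro F G hFbase hGbase hFG hFv hFw hGv hGw
    by_contra hvwne
    obtain ⟨Fv, hFv'⟩ := hv
    obtain ⟨Fw', hFw'⟩ := hw
    have hFeqv : F = Fv := by
      apply P.facet_eq hfd F Fv
      intro t ht htF
      by_contra hne
      have htL := P.col_move hFv' ht hne
      have hge := P.latt_form_ge htL F
      rw [map_add, htF, hFv] at hge
      omega
    have hFeqw : F = Fw' := by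
      apply P.facet_eq hfd F Fw'
      intro t ht htF
      by_contra hne
      have htL := P.col_move hFw' ht hne
      have hge := P.latt_form_ge htL F
      rw [map_add, htF, hFw] at hge
      omega
    obtain ⟨b, hb⟩ := hGbase
    by_cases h1 : v + b = 0
    · by_cases h2 : w + b = 0
      · apply hvwne
        rw [add_eq_zero_iff_eq_neg.1 h1, add_eq_zero_iff_eq_neg.1 h2]
      · have hpwb : P.ProdEx w b := P.prodEx_of_form_pos hfd hgen hFw' hb h2 (by omega)
        have hFw'' : P.IsBaseFacet w F := by rw [hFeqw]; exact hFw'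
        have h3 : F.form b = 0 := P.prod_form_eq_zero hgen hpwb hFw''
        have hbv : b = -v := by
          have := add_eq_zero_iff_eq_neg.1 h1
          rw [this]; abel
        rw [hbv, map_neg, hFv] at h3
        omega
    · by_cases h2 : w + b = 0
      · have hpvb : P.ProdEx v b := P.prodEx_of_form_pos hfd hgen hFv' hb h1 (by omega)
        have hFv'' : P.IsBaseFacet v F := by rw [hFeqv]; exact hFv'
        have h3 : F.form b = 0 := P.prod_form_eq_zero hgen hpvb hFv''
        have hbw : b = -w := by
          have := add_eq_zero_iff_eq_neg.1 h2
          rw [this]; abel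
        rw [hbw, map_neg, hFw] at h3
        omega
      · have hpvb : P.ProdEx v b := P.prodEx_of_form_pos hfd hgen hFv' hb h1 (by omega)
        have hpwb : P.ProdEx w b := P.prodEx_of_form_pos hfd hgen hFw' hb h2 (by omega)
        obtain ⟨d, hd⟩ := hcd.1 v w b hvwne hpvb hpwb
        rcases hd with ⟨hpd, hsum⟩ | ⟨hpd, hsum⟩
        · -- d + w = v
          obtain ⟨Fd, hFd⟩ := hpd.1
          have hbase : P.IsBaseFacet v Fd := by
            have hbb := P.isBaseFacet_add hpd hFd
            rwa [hsum] at hbb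
          have heq : Fd = Fv := P.base_facet_unique hfd hgen hbase hFv'
          have hnd := P.base_form_eq_neg_one hgen hFd
          have hdv : d = v - w := by
            rw [eq_sub_of_add_eq hsum]
          rw [heq, ← hFeqv, hdv, map_sub, hFv, hFw] at hnd
          omega
        · -- d + v = w
          obtain ⟨Fd, hFd⟩ := hpd.1
          have hbase : P.IsBaseFacet w Fd := by
            have hbb := P.isBaseFacet_add hpd hFd
            rwa [hsum] at hbb
          have heq : Fd = Fw' := P.base_facet_unique hfd hgen hbase hFw'
          have hnd := P.base_form_eq_neg_one hgen hFd
          have hdv : d = w - v := by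
            rw [eq_sub_of_add_eq hsum]
          rw [heq, ← hFeqw, hdv, map_sub, hFv, hFw] at hnd
          omega
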